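/- Let P, Q : ℤ → ℝ. Then 𝒫₁ applied to the pair (P − Q − Q⁺, Q + Q⁻ + Q⁺ − P − P⁻) equals ( P(Q⁺ − Q), Q(Q⁺ − Q⁻ − P + P⁻) ). In other words, the first positive flow P_{t₀} = P(Q⁺ − Q), Q_{t₀} = Q(Q⁺ − Q⁻ − P + P⁻) of the Ablowitz–Ladik hierarchy is the Hamiltonian system with operator 𝒫₁ and Hamiltonian H₀ = Σₙ h₀(n), h₀ = ½(Q(Q + Q⁻ − P − P⁻) + QQ⁺ − PQ⁺ − PQ + P²), whose variational derivatives are δH₀/δP = P − Q − Q⁺ and δH₀/δQ = Q + Q⁻ + Q⁺ − P − P⁻. -/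
import Mathlib

/-- The shift operator: `(shift f) n = f (n+1)`, i.e. `f⁺`. -/
def shift (f : ℤ → ℝ) : ℤ → ℝ := fun n => f (n + 1)

/-- The inverse shift operator: `(shiftInv f) n = f (n-1)`, i.e. `f⁻`. -/
def shiftInv (f : ℤ → ℝ) : ℤ → ℝ := fun n => f (n - 1)

/-- The first Hamiltonian operator of the Ablowitz–Ladik hierarchy:
`𝒫₁(ξ) = ( Qξ₁⁻ − (Qξ₁)⁺ + Qξ₂ − (Qξ₂)⁺ , Q(ξ₁⁻ − ξ₁) )`. -/
def P1op (Q : ℤ → ℝ) (ξ : (ℤ → ℝ) × (ℤ → ℝ)) : (ℤ → ℝ) × (ℤ → ℝ) :=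
  (Q * shiftInv ξ.1 - shift (Q * ξ.1) + Q * ξ.2 - shift (Q * ξ.2),
   Q * (shiftInv ξ.1 - ξ.1))

/-- The first positive flow
`P_{t₀} = P(Q⁺ − Q)`, `Q_{t₀} = Q(Q⁺ − Q⁻ − P + P⁻)` of the Ablowitz–Ladik hierarchy is
the Hamiltonian system with operator `𝒫₁` and Hamiltonian `H₀`, whose variational
derivatives are `δH₀/δP = P − Q − Q⁺` and `δH₀/δQ = Q + Q⁻ + Q⁺ − P − P⁻`:
`𝒫₁` applied to the pair `(P − Q − Q⁺, Q + Q⁻ + Q⁺ − P − P⁻)` equals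
`( P(Q⁺ − Q), Q(Q⁺ − Q⁻ − P + P⁻) )`. -/
theorem first_positive_flow_hamiltonian_P1 (P Q : ℤ → ℝ) :
    P1op Q (fun n => P n - Q n - Q (n + 1),
            fun n => Q n + Q (n - 1) + Q (n + 1) - P n - P (n - 1)) =
      (fun n => P n * (Q (n + 1) - Q n),
       fun n => Q n * (Q (n + 1) - Q (n - 1) - P n + P (n - 1))) := by
  unfold P1op shift shiftInv
  refine Prod.ext ?_ ?_ <;> funext n <;>
    simp only [Pi.mul_apply, Pi.sub_apply, Pi.add_apply] <;>
    ring_nf
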